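/- Let Q be a left quasigroup and α, β congruences such that the centralizing relation C(α,β;0_Q) holds (in the sense of commutator theory). Then [Dis_α, Dis_β] = 1 and α ≤ σ_{Dis_β}, where x σ_N y means N_x = N_y. In particular, if α ≤ ζ_Q (the center of Q) then Dis_α is contained in the center of Dis(Q) and α ≤ σ_Q. -/

import Mathlib

/-! Basic theory of left quasigroups, following the paper. -/

structure LeftQuasigroup (Q : Type*) where
  op : Q → Q → Q
  ld : Q → Q → Q
  op_ld : ∀ x y, op x (ld x y) = y
  ld_op : ∀ x y, ld x (op x y) = y

/-- Orbit relation of a subgroup of permutations. -/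
def orbRel {Q : Type*} (N : Subgroup (Equiv.Perm Q)) (x y : Q) : Prop := ∃ h ∈ N, h y = x

/-- Orbit equivalence relation of a subgroup of permutations. -/
def orbSetoid {Q : Type*} (N : Subgroup (Equiv.Perm Q)) : Setoid Q where
  r := orbRel N
  iseqv := by
    constructor
    · exact fun x => ⟨1, N.one_mem, rfl⟩
    · rintro x y ⟨h, hN, rfl⟩
      exact ⟨h⁻¹, N.inv_mem hN, Equiv.symm_apply_apply h y⟩
    · rintro x y z ⟨h, hN, rfl⟩ ⟨g, gN, rfl⟩
      exact ⟨h * g, N.mul_mem hN gN, rfl⟩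

/-- The subgroup of permutations moving every point inside its `α`-class. -/
def kerRel {Q : Type*} (α : Setoid Q) : Subgroup (Equiv.Perm Q) where
  carrier := {g | ∀ x, α.r (g x) x}
  one_mem' := fun x => α.refl x
  mul_mem' := by
    intro a b ha hb x
    exact α.trans (ha (b x)) (hb x)
  inv_mem' := by
    intro a ha x
    have := ha (a⁻¹ x)
    rw [show a (a⁻¹ x) = x from Equiv.apply_symm_apply a x] at this
    exact α.symm this

/-- Pointwise stabilizer of `x` in `N`. -/
def pstab {Q : Type*} (N : Subgroup (Equiv.Perm Q)) (x : Q) : Subgroup (Equiv.Perm Q) :=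
  N ⊓ MulAction.stabilizer (Equiv.Perm Q) x

/-- Meet of a family of setoids. -/
def infSetoid {Q I : Type*} (α : I → Setoid Q) : Setoid Q where
  r x y := ∀ i, (α i).r x y
  iseqv := ⟨fun x i => (α i).refl x, fun h i => (α i).symm (h i),
    fun h g i => (α i).trans (h i) (g i)⟩

namespace LeftQuasigroup

variable {Q : Type*} (S : LeftQuasigroup Q)

/-- Left translation as a permutation. -/
def L (x : Q) : Equiv.Perm Q := ⟨S.op x, S.ld x, S.ld_op x, S.op_ld x⟩

/-- The left multiplication group. -/
def LMlt : Subgroup (Equiv.Perm Q) := Subgroup.closure (Set.range S.L)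

/-- The displacement group relative to a binary relation `r`. -/
def disRel (r : Q → Q → Prop) : Subgroup (Equiv.Perm Q) :=
  Subgroup.closure {g | ∃ h ∈ S.LMlt, ∃ x y, r x y ∧ g = h * (S.L x * (S.L y)⁻¹) * h⁻¹}

/-- The displacement group. -/
def Dis : Subgroup (Equiv.Perm Q) := S.disRel fun _ _ => True

/-- `Dis^α`. -/
def disUp (α : Setoid Q) : Subgroup (Equiv.Perm Q) := S.Dis ⊓ kerRel α

/-- `LMlt^α`, the kernel of `π_α`. -/
def lmltKer (α : Setoid Q) : Subgroup (Equiv.Perm Q) := S.LMlt ⊓ kerRel α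

/-- Congruences of a left quasigroup. -/
structure IsCongruence (α : Setoid Q) : Prop where
  op_compat : ∀ {x y z w : Q}, α.r x y → α.r z w → α.r (S.op x z) (S.op y w)
  ld_compat : ∀ {x y z w : Q}, α.r x y → α.r z w → α.r (S.ld x z) (S.ld y w)

theorem L_mem_lmlt (x : Q) : S.L x ∈ S.LMlt := Subgroup.subset_closure ⟨x, rfl⟩

theorem disRel_le_lmlt (r : Q → Q → Prop) : S.disRel r ≤ S.LMlt := by
  refine (Subgroup.closure_le _).2 ?_
  rintro g ⟨h, hh, x, y, _, rfl⟩
  exact mul_mem (mul_mem hh (mul_mem (S.L_mem_lmlt x) (inv_mem (S.L_mem_lmlt y)))) (inv_mem hh)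

theorem lmlt_maps {α : Setoid Q} (hα : S.IsCongruence α) {g : Equiv.Perm Q}
    (hg : g ∈ S.LMlt) : ∀ x y, α.r x y → α.r (g x) (g y) := by
  have H : ∀ g ∈ S.LMlt,
      (∀ x y, α.r x y → α.r (g x) (g y)) ∧ (∀ x y, α.r x y → α.r (g⁻¹ x) (g⁻¹ y)) := by
    intro g hg
    induction hg using Subgroup.closure_induction with
    | mem g hgen =>
      obtain ⟨z, rfl⟩ := hgen
      constructor
      · intro x y h; exact hα.op_compat (α.refl z) h
      · intro x y h; exact hα.ld_compat (α.refl z) h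
    | one =>
      constructor <;> intro x y h <;> simpa using h
    | mul a b _ _ ha hb =>
      constructor
      · intro x y h
        exact ha.1 _ _ (hb.1 _ _ h)
      · intro x y h
        have := hb.2 _ _ (ha.2 _ _ h)
        simpa [mul_inv_rev] using this
    | inv a _ ha =>
      refine ⟨ha.2, ?_⟩
      intro x y h
      simpa using ha.1 x y h
  exact (H g hg).1

/-- The blockwise stabilizer `Dis(Q)_{[x]_α}`. -/
def blockStab (α : Setoid Q) (hα : S.IsCongruence α) (x : Q) : Subgroup (Equiv.Perm Q) where
  carrier := {g | g ∈ S.Dis ∧ α.r (g x) x}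
  one_mem' := ⟨S.Dis.one_mem, α.refl x⟩
  mul_mem' := by
    intro a b ha hb
    refine ⟨S.Dis.mul_mem ha.1 hb.1, ?_⟩
    exact α.trans (S.lmlt_maps hα (S.disRel_le_lmlt _ ha.1) _ _ hb.2) ha.2
  inv_mem' := by
    intro a ha
    refine ⟨S.Dis.inv_mem ha.1, ?_⟩
    have h2 := S.lmlt_maps hα (inv_mem (S.disRel_le_lmlt _ ha.1)) _ _ ha.2
    rw [show a⁻¹ (a x) = x from Equiv.symm_apply_apply a x] at h2
    exact α.symm h2

/-- The admissible subgroups `Norm(Q)`. -/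
def Norm : Set (Subgroup (Equiv.Perm Q)) :=
  {N | N ≤ S.LMlt ∧ (∀ h ∈ S.LMlt, ∀ n ∈ N, h * n * h⁻¹ ∈ N) ∧ S.disRel (orbRel N) ≤ N}

/-- Image of a subgroup along the canonical projection `π_α`. -/
def piSub (α : Setoid Q) (N : Subgroup (Equiv.Perm Q)) : Subgroup (Equiv.Perm (Quotient α)) where
  carrier := {k | ∃ h ∈ N, ∀ x : Q, k (Quotient.mk α x) = Quotient.mk α (h x)}
  one_mem' := ⟨1, N.one_mem, fun _ => rfl⟩
  mul_mem' := by
    rintro a b ⟨ha, haN, hae⟩ ⟨hb, hbN, hbe⟩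
    refine ⟨ha * hb, N.mul_mem haN hbN, fun x => ?_⟩
    show a (b (Quotient.mk α x)) = _
    rw [hbe, hae]; rfl
  inv_mem' := by
    rintro a ⟨h, hN, he⟩
    refine ⟨h⁻¹, N.inv_mem hN, fun x => ?_⟩
    have h1 := he (h⁻¹ x)
    rw [show h (h⁻¹ x) = x from Equiv.apply_symm_apply h x] at h1
    rw [← h1, show a⁻¹ (a (Quotient.mk α (h⁻¹ x))) = Quotient.mk α (h⁻¹ x) from
      Equiv.symm_apply_apply a _]

/-- Preimage of a subgroup along the canonical projection `π_α`. -/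
def piPre (α : Setoid Q) (K : Subgroup (Equiv.Perm (Quotient α))) : Subgroup (Equiv.Perm Q) where
  carrier := {h | h ∈ S.LMlt ∧ ∃ k ∈ K, ∀ x : Q, k (Quotient.mk α x) = Quotient.mk α (h x)}
  one_mem' := ⟨S.LMlt.one_mem, 1, K.one_mem, fun _ => rfl⟩
  mul_mem' := by
    rintro a b ⟨haL, ka, kaK, hae⟩ ⟨hbL, kb, kbK, hbe⟩
    refine ⟨S.LMlt.mul_mem haL hbL, ka * kb, K.mul_mem kaK kbK, fun x => ?_⟩
    show ka (kb (Quotient.mk α x)) = _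
    rw [hbe, hae]; rfl
  inv_mem' := by
    rintro a ⟨haL, k, kK, he⟩
    refine ⟨S.LMlt.inv_mem haL, k⁻¹, K.inv_mem kK, fun x => ?_⟩
    have h1 := he (a⁻¹ x)
    rw [show a (a⁻¹ x) = x from Equiv.apply_symm_apply a x] at h1
    rw [← h1, show k⁻¹ (k (Quotient.mk α (a⁻¹ x))) = Quotient.mk α (a⁻¹ x) from
      Equiv.symm_apply_apply k _]

/-- Quotient left quasigroup. -/
def quotLQ (α : Setoid Q) (hα : S.IsCongruence α) : LeftQuasigroup (Quotient α) where
  op := Quotient.lift₂ (fun x y => Quotient.mk α (S.op x y))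
    (fun _ _ _ _ h1 h2 => Quotient.sound (hα.op_compat h1 h2))
  ld := Quotient.lift₂ (fun x y => Quotient.mk α (S.ld x y))
    (fun _ _ _ _ h1 h2 => Quotient.sound (hα.ld_compat h1 h2))
  op_ld := fun a b => Quotient.inductionOn₂ a b fun x y => congrArg (Quotient.mk α) (S.op_ld x y)
  ld_op := fun a b => Quotient.inductionOn₂ a b fun x y => congrArg (Quotient.mk α) (S.ld_op x y)

/-- Idempotent left quasigroup. -/
def Idem : Prop := ∀ x : Q, S.op x x = x

/-- Left distributive law (defining quandles among idempotent left quasigroups). -/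
def Ldist : Prop := ∀ x y z : Q, S.op x (S.op y z) = S.op (S.op x y) (S.op x z)

/-- A left quasigroup is faithful if the Cayley kernel is trivial. -/
def Faithful : Prop := ∀ x y : Q, (∀ z, S.op x z = S.op y z) → x = y

/-- Connected: `LMlt` acts transitively. -/
def Connected : Prop := ∀ x y : Q, ∃ h ∈ S.LMlt, h y = x

/-- Semiregular: `Dis` acts with trivial stabilizers. -/
def Semiregular : Prop := ∀ g ∈ S.Dis, ∀ x : Q, g x = x → g = 1

/-- Subalgebras. -/
def IsSubalgebra (A : Set Q) : Prop :=
  ∀ ⦃x⦄, x ∈ A → ∀ ⦃y⦄, y ∈ A → S.op x y ∈ A ∧ S.ld x y ∈ A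

/-- The left quasigroup structure on a subalgebra. -/
def subLQ (A : Set Q) (hA : S.IsSubalgebra A) : LeftQuasigroup A where
  op a b := ⟨S.op a b, (hA a.2 b.2).1⟩
  ld a b := ⟨S.ld a b, (hA a.2 b.2).2⟩
  op_ld a b := Subtype.ext (S.op_ld a b)
  ld_op a b := Subtype.ext (S.ld_op a b)

/-- Superconnected: every subalgebra is connected. -/
def Superconnected : Prop := ∀ (A : Set Q) (hA : S.IsSubalgebra A), (S.subLQ A hA).Connected

/-- Superfaithful: every subalgebra is faithful. -/
def Superfaithful : Prop := ∀ (A : Set Q) (hA : S.IsSubalgebra A), (S.subLQ A hA).Faithful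

theorem infCong {I : Type*} {α : I → Setoid Q} (hc : ∀ i, S.IsCongruence (α i)) :
    S.IsCongruence (infSetoid α) :=
  ⟨fun h1 h2 i => (hc i).op_compat (h1 i) (h2 i),
   fun h1 h2 i => (hc i).ld_compat (h1 i) (h2 i)⟩

end LeftQuasigroup

/-- Terms in the language of left quasigroups in `n` variables. -/
inductive LQTerm : ℕ → Type
  | var : ∀ {n}, Fin n → LQTerm n
  | op : ∀ {n}, LQTerm n → LQTerm n → LQTerm n
  | ld : ∀ {n}, LQTerm n → LQTerm n → LQTerm n

/-- Evaluation of terms. -/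
def evalT {Q : Type*} (S : LeftQuasigroup Q) : ∀ {n}, LQTerm n → (Fin n → Q) → Q
  | _, .var i, v => v i
  | _, .op t s, v => S.op (evalT S t v) (evalT S s v)
  | _, .ld t s, v => S.ld (evalT S t v) (evalT S s v)

/-- The centralizing relation `C(a, b; d)` of commutator theory. -/
def CC {Q : Type*} (S : LeftQuasigroup Q) (a b d : Q → Q → Prop) : Prop :=
  ∀ (n : ℕ) (t : LQTerm (n + 1)) (x y : Q) (z u : Fin n → Q),
    a x y → (∀ i, b (z i) (u i)) →
    d (evalT S t (Fin.cons x z)) (evalT S t (Fin.cons x u)) →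
    d (evalT S t (Fin.cons y z)) (evalT S t (Fin.cons y u))

/-- Nilpotency of length `n` in the sense of commutator theory: the ascending central
series (characterized congruence by congruence) reaches the full congruence at step `n`. -/
def LeftQuasigroup.NilpotentLength {Q : Type*} (S : LeftQuasigroup Q) (n : ℕ) : Prop :=
  ∃ c : ℕ → Setoid Q,
    (∀ k, S.IsCongruence (c k)) ∧
    (∀ x y : Q, (c 0).r x y ↔ x = y) ∧
    (∀ k, ∀ β : Setoid Q, S.IsCongruence β →
      (CC S β.r (fun _ _ => True) (c k).r ↔ β ≤ c (k + 1))) ∧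
    (∀ x y : Q, (c n).r x y)

/-! The centralizing condition `C(α, β; 0)` is a statement about one term evaluated at two
`β`-related parameter tuples. Every element `f` of `Dis_β` is such a pair of unary polynomials,
`f = t(·, z̄)` and `id = t(·, ū)` with `z̄ β ū`, so `C(α, β; 0)` forces fixed points of `f` to
spread along `α`-classes. For a generator `g = h L_x L_y⁻¹ h⁻¹` of `Dis_α` and a point `w`, the
two polynomials `s ↦ h (s · (y \ h⁻¹ (f w)))` and `s ↦ f (h (s · (y \ h⁻¹ w)))` are again such a
pair; they agree at `s = y`, hence at `s = x`, which says `g (f w) = f (g w)`. -/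

namespace LQTerm

def rename {n m : ℕ} (f : Fin n → Fin m) : LQTerm n → LQTerm m
  | .var i => .var (f i)
  | .op t s => .op (t.rename f) (s.rename f)
  | .ld t s => .ld (t.rename f) (s.rename f)

theorem evalT_rename {Q : Type*} (S : LeftQuasigroup Q) {n m : ℕ} (f : Fin n → Fin m)
    (t : LQTerm n) (v : Fin m → Q) : evalT S (t.rename f) v = evalT S t (v ∘ f) := by
  induction t with
  | var i => simp only [rename, evalT, Function.comp_apply]
  | op t s ht hs => simp only [rename, evalT, ht, hs]
  | ld t s ht hs => simp only [rename, evalT, ht, hs]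

end LQTerm

namespace LeftQuasigroup

variable {Q : Type*} (S : LeftQuasigroup Q)

inductive PolyPair (b : Q → Q → Prop) : (Q → Q) → (Q → Q) → Prop
  | id : PolyPair b (fun s => s) (fun s => s)
  | const {c d : Q} : b c d → PolyPair b (fun _ => c) (fun _ => d)
  | op {p q p' q' : Q → Q} : PolyPair b p q → PolyPair b p' q' →
      PolyPair b (fun s => S.op (p s) (p' s)) (fun s => S.op (q s) (q' s))
  | ld {p q p' q' : Q → Q} : PolyPair b p q → PolyPair b p' q' →
      PolyPair b (fun s => S.ld (p s) (p' s)) (fun s => S.ld (q s) (q' s))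

def TermPair (b : Q → Q → Prop) (p q : Q → Q) : Prop :=
  ∃ (n : ℕ) (t : LQTerm (n + 1)) (z u : Fin n → Q), (∀ i, b (z i) (u i)) ∧
    (∀ s, p s = evalT S t (Fin.cons s z)) ∧ ∀ s, q s = evalT S t (Fin.cons s u)

variable {S}

theorem TermPair.exists_common_params {b : Q → Q → Prop} {p q p' q' : Q → Q}
    (h : S.TermPair b p q) (h' : S.TermPair b p' q') :
    ∃ (n : ℕ) (t t' : LQTerm (n + 1)) (z u : Fin n → Q), (∀ i, b (z i) (u i)) ∧
      (∀ s, p s = evalT S t (Fin.cons s z)) ∧ (∀ s, q s = evalT S t (Fin.cons s u)) ∧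
      (∀ s, p' s = evalT S t' (Fin.cons s z)) ∧ ∀ s, q' s = evalT S t' (Fin.cons s u) := by
  obtain ⟨n, t, z, u, hzu, hp, hq⟩ := h
  obtain ⟨m, t', z', u', hzu', hp', hq'⟩ := h'
  have hleft : ∀ (s : Q) (v v' : Fin _ → Q),
      (Fin.cons s (Fin.append v v') : Fin (n + m + 1) → Q) ∘
        Fin.cons 0 (Fin.succ ∘ Fin.castAdd m) = Fin.cons s v := by
    intro s v v'
    funext i
    refine Fin.cases ?_ (fun i => ?_) i <;> simp
  have hright : ∀ (s : Q) (v v' : Fin _ → Q),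
      (Fin.cons s (Fin.append v v') : Fin (n + m + 1) → Q) ∘
        Fin.cons 0 (Fin.succ ∘ Fin.natAdd n) = Fin.cons s v' := by
    intro s v v'
    funext i
    refine Fin.cases ?_ (fun i => ?_) i <;> simp
  refine ⟨n + m, t.rename (Fin.cons 0 (Fin.succ ∘ Fin.castAdd m)),
    t'.rename (Fin.cons 0 (Fin.succ ∘ Fin.natAdd n)), Fin.append z z', Fin.append u u', ?_,
    ?_, ?_, ?_, ?_⟩
  · exact Fin.addCases (fun i => by simpa using hzu i) (fun i => by simpa using hzu' i)
  all_goals intro s; simp only [LQTerm.evalT_rename, hleft, hright, hp, hq, hp', hq']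

namespace PolyPair

variable {b : Q → Q → Prop}

theorem symm {β : Setoid Q} {p q : Q → Q} (h : S.PolyPair β.r p q) : S.PolyPair β.r q p := by
  induction h with
  | id => exact .id
  | const hcd => exact .const (β.symm hcd)
  | op _ _ ih ih' => exact ih.op ih'
  | ld _ _ ih ih' => exact ih.ld ih'

theorem comp {p q p' q' : Q → Q} (h : S.PolyPair b p q) (h' : S.PolyPair b p' q') :
    S.PolyPair b (p ∘ p') (q ∘ q') := by
  induction h with
  | id => exact h'
  | const hcd => exact .const hcd
  | op _ _ ih ih' => exact ih.op ih'
  | ld _ _ ih ih' => exact ih.ld ih'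

theorem termPair {p q : Q → Q} (h : S.PolyPair b p q) : S.TermPair b p q := by
  induction h with
  | id => exact ⟨0, .var 0, Fin.elim0, Fin.elim0, fun i => i.elim0, fun _ => by simp [evalT],
      fun _ => by simp [evalT]⟩
  | @const c d hcd =>
    exact ⟨1, .var 1, ![c], ![d], fun i => by simpa [Fin.fin_one_eq_zero i] using hcd,
      fun _ => by simp [evalT], fun _ => by simp [evalT]⟩
  | op _ _ ih ih' =>
    obtain ⟨n, t, t', z, u, hzu, hp, hq, hp', hq'⟩ := ih.exists_common_params ih'
    exact ⟨n, .op t t', z, u, hzu, fun s => by simp only [evalT, hp, hp'],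
      fun s => by simp only [evalT, hq, hq']⟩
  | ld _ _ ih ih' =>
    obtain ⟨n, t, t', z, u, hzu, hp, hq, hp', hq'⟩ := ih.exists_common_params ih'
    exact ⟨n, .ld t t', z, u, hzu, fun s => by simp only [evalT, hp, hp'],
      fun s => by simp only [evalT, hq, hq']⟩

theorem eq_of_centralizes {a : Q → Q → Prop} (hC : CC S a b (fun x y => x = y))
    {p q : Q → Q} (h : S.PolyPair b p q) {x y : Q} (hxy : a x y) (hx : p x = q x) :
    p y = q y := by
  obtain ⟨n, t, z, u, hzu, hp, hq⟩ := h.termPair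
  simpa only [hp, hq] using hC n t x y z u hxy hzu (by simpa only [hp, hq] using hx)

end PolyPair

variable {β : Setoid Q}

theorem polyPair_of_mem_lmlt {h : Equiv.Perm Q} (hh : h ∈ S.LMlt) : S.PolyPair β.r h h := by
  induction hh using Subgroup.closure_induction'' with
  | mem _ hx =>
    obtain ⟨c, rfl⟩ := hx
    exact (PolyPair.const (β.refl c)).op .id
  | inv_mem _ hx =>
    obtain ⟨c, rfl⟩ := hx
    exact (PolyPair.const (β.refl c)).ld .id
  | one => exact .id
  | mul _ _ _ _ hx hy => exact hx.comp hy

theorem polyPair_L_mul_L_inv {x y : Q} (hxy : β.r x y) :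
    S.PolyPair β.r ⇑(S.L x * (S.L y)⁻¹) (fun s => s) := by
  have hpair := (PolyPair.const (S := S) hxy).op ((PolyPair.const (β.refl y)).ld .id)
  simp only [S.op_ld] at hpair
  exact hpair

theorem polyPair_of_mem_disRel {f : Equiv.Perm Q} (hf : f ∈ S.disRel β.r) :
    S.PolyPair β.r f (fun s => s) := by
  have conj : ∀ {h k : Equiv.Perm Q}, h ∈ S.LMlt → S.PolyPair β.r k (fun s => s) →
      S.PolyPair β.r ⇑(h * k * h⁻¹) (fun s => s) := fun {h k} hh hk => by
    convert (polyPair_of_mem_lmlt hh).comp (hk.comp (polyPair_of_mem_lmlt (inv_mem hh)))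
      using 1 <;> funext s <;> simp
  induction hf using Subgroup.closure_induction'' with
  | mem _ hg =>
    obtain ⟨h, hh, x, y, hxy, rfl⟩ := hg
    exact conj hh (polyPair_L_mul_L_inv hxy)
  | inv_mem _ hg =>
    obtain ⟨h, hh, x, y, hxy, rfl⟩ := hg
    have hinv : (h * (S.L x * (S.L y)⁻¹) * h⁻¹)⁻¹ = h * (S.L y * (S.L x)⁻¹) * h⁻¹ := by group
    exact hinv ▸ conj hh (polyPair_L_mul_L_inv (β.symm hxy))
  | one => exact .id
  | mul _ _ _ _ hf hf' => exact hf.comp hf'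

variable {α : Setoid Q}

theorem apply_eq_self_of_centralizes (hC : CC S α.r β.r (fun x y => x = y))
    {f : Equiv.Perm Q} (hf : f ∈ S.disRel β.r) {x y : Q} (hxy : α.r x y) (hfx : f x = x) :
    f y = y :=
  (polyPair_of_mem_disRel hf).eq_of_centralizes hC hxy hfx

theorem pstab_disRel_eq_of_centralizes (hC : CC S α.r β.r (fun x y => x = y)) {x y : Q}
    (hxy : α.r x y) : pstab (S.disRel β.r) x = pstab (S.disRel β.r) y := by
  ext f
  simp only [pstab, Subgroup.mem_inf, MulAction.mem_stabilizer_iff, Equiv.Perm.smul_def]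
  exact and_congr_right fun hf => ⟨apply_eq_self_of_centralizes hC hf hxy,
    apply_eq_self_of_centralizes hC hf (α.symm hxy)⟩

theorem conj_L_mul_L_inv_apply_comm (hC : CC S α.r β.r (fun x y => x = y))
    {h f : Equiv.Perm Q} (hh : h ∈ S.LMlt) (hf : f ∈ S.disRel β.r) {x y : Q} (hxy : α.r x y)
    (w : Q) : h (S.op x (S.ld y (h⁻¹ (f w)))) = f (h (S.op x (S.ld y (h⁻¹ w)))) := by
  have hF := polyPair_of_mem_disRel hf
  have hpair : S.PolyPair β.r (fun s => h (S.op s (S.ld y (h⁻¹ (f w)))))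
      (fun s => f (h (S.op s (S.ld y (h⁻¹ w))))) :=
    hF.symm.comp ((polyPair_of_mem_lmlt hh).comp (PolyPair.id.op
      ((PolyPair.const (β.refl y)).ld ((polyPair_of_mem_lmlt (inv_mem hh)).comp
        (hF.comp (.const (β.refl w)))))))
  refine hpair.eq_of_centralizes hC (α.symm hxy) ?_
  simp only [Equiv.Perm.coe_inv, S.op_ld, Equiv.apply_symm_apply]

theorem disRel_le_centralizer_of_centralizes (hC : CC S α.r β.r (fun x y => x = y)) :
    S.disRel α.r ≤ Subgroup.centralizer (S.disRel β.r) := by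
  refine (Subgroup.closure_le _).2 ?_
  rintro _ ⟨h, hh, x, y, hxy, rfl⟩
  refine Subgroup.mem_centralizer_iff.2 fun f hf => Equiv.ext fun w => ?_
  exact (conj_L_mul_L_inv_apply_comm hC hh hf hxy w).symm

end LeftQuasigroup

theorem stmt15_general {Q : Type*} (S : LeftQuasigroup Q) (α β : Setoid Q)
    (hC : CC S α.r β.r (fun x y => x = y)) :
    ((∀ g ∈ S.disRel α.r, ∀ h ∈ S.disRel β.r, g * h = h * g) ∧
      ∀ x y : Q, α.r x y → pstab (S.disRel β.r) x = pstab (S.disRel β.r) y) ∧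
    (CC S α.r (fun _ _ => True) (fun x y => x = y) →
      (∀ g ∈ S.disRel α.r, ∀ h ∈ S.Dis, g * h = h * g) ∧
      ∀ x y : Q, α.r x y → pstab S.Dis x = pstab S.Dis y) := by
  have centralizes : ∀ β : Setoid Q, CC S α.r β.r (fun x y => x = y) →
      (∀ g ∈ S.disRel α.r, ∀ h ∈ S.disRel β.r, g * h = h * g) ∧
        ∀ x y : Q, α.r x y → pstab (S.disRel β.r) x = pstab (S.disRel β.r) y :=
    fun β hC => ⟨fun g hg h hh => (Subgroup.mem_centralizer_iff.1
      (S.disRel_le_centralizer_of_centralizes hC hg) h hh).symm,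
      fun _ _ => S.pstab_disRel_eq_of_centralizes hC⟩
  exact ⟨centralizes β hC, centralizes ⊤⟩

/-- if `C(α,β;0)` then `[Dis_α, Dis_β] = 1` and `α ≤ σ_{Dis_β}`;
in particular a central congruence has `Dis_α ≤ Z(Dis(Q))` and `α ≤ σ_Q`. -/
theorem stmt15 {Q : Type*} (S : LeftQuasigroup Q) (α β : Setoid Q)
    (hα : S.IsCongruence α) (hβ : S.IsCongruence β)
    (hC : CC S α.r β.r (fun x y => x = y)) :
    ((∀ g ∈ S.disRel α.r, ∀ h ∈ S.disRel β.r, g * h = h * g) ∧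
      ∀ x y : Q, α.r x y → pstab (S.disRel β.r) x = pstab (S.disRel β.r) y) ∧
    (CC S α.r (fun _ _ => True) (fun x y => x = y) →
      (∀ g ∈ S.disRel α.r, ∀ h ∈ S.Dis, g * h = h * g) ∧
      ∀ x y : Q, α.r x y → pstab S.Dis x = pstab S.Dis y) :=
  stmt15_general S α β hC
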